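/- arXiv:1503.05246 — 2 statements merged into one kernel-verified Lean document; each statement's English description precedes it below -/
import Mathlib

section
/- Let f : 𝕋² → ℝ² be measurable with ‖f‖_∞ < d and let a > 0. Suppose h : 𝕋² → ℝ is differentiable with h(x) > 0 for all x and |∇h(x) − f(x)/(2a)| ≤ d/(2a) for almost every x. Then the pair (h, u) with u ≡ 0 is a stationary weak solution of the Savage–Hutter system: ∂ₜh + div(hu) = 0 holds, and for a.e. x there exists b(x) in the closed unit ball of ℝ² such that ∇(a h²)(x) = h(x)(−d·b(x) + f(x)). -/
open MeasureTheory Metric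

/-! Since `∇(a h²) = 2 a h ∇h`, the momentum equation with `u = 0` asks for `b` with
`2 a ∇h = -d b + f`; the choice `b = (f - 2 a ∇h) / d` works, and the hypothesis on `∇h` is
exactly `‖b‖ ≤ 1`. -/

theorem HasGradientAt.comp_hasDerivAt {F : Type*} [NormedAddCommGroup F] [InnerProductSpace ℝ F]
    [CompleteSpace F] {φ : ℝ → ℝ} {φ' : ℝ} {h : F → ℝ} {g x : F}
    (hφ : HasDerivAt φ φ' (h x)) (hh : HasGradientAt h g x) :
    HasGradientAt (φ ∘ h) (φ' • g) x := by
  rw [hasGradientAt_iff_hasFDerivAt, map_smul]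
  exact hφ.comp_hasFDerivAt x hh.hasFDerivAt

theorem gradient_const_mul_sq {F : Type*} [NormedAddCommGroup F] [InnerProductSpace ℝ F]
    [CompleteSpace F] (a : ℝ) {h : F → ℝ} {x : F} (hh : DifferentiableAt ℝ h x) :
    gradient (fun y => a * h y ^ 2) x = (2 * a * h x) • gradient h x := by
  have hφ : HasDerivAt (fun s : ℝ => a * s ^ 2) (2 * a * h x) (h x) := by
    simpa [mul_comm, mul_left_comm] using (hasDerivAt_pow 2 (h x)).const_mul a
  exact (hh.hasGradientAt.comp_hasDerivAt hφ).gradient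

theorem exists_mem_closedBall_smul_eq_of_norm_sub_le {E : Type*} [NormedAddCommGroup E]
    [NormedSpace ℝ E] {c d : ℝ} (hc : 0 < c) (hd : 0 < d) {g v : E}
    (hg : ‖g - c⁻¹ • v‖ ≤ d / c) :
    ∃ b ∈ closedBall (0 : E) 1, c • g = (-d) • b + v := by
  refine ⟨d⁻¹ • (v - c • g), ?_, ?_⟩
  · have hb : v - c • g = (-c) • (g - c⁻¹ • v) := by
      rw [neg_smul, smul_sub, smul_smul, mul_inv_cancel₀ hc.ne', one_smul, neg_sub]
    rw [mem_closedBall, dist_zero_right, hb, norm_smul, norm_smul, norm_inv, norm_neg,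
      Real.norm_of_nonneg hd.le, Real.norm_of_nonneg hc.le]
    calc d⁻¹ * (c * ‖g - c⁻¹ • v‖) ≤ d⁻¹ * (c * (d / c)) := by gcongr
      _ = 1 := by field_simp
  · rw [smul_smul, neg_mul, mul_inv_cancel₀ hd.ne']
    module

theorem stationary_savage_hutter_general {a d : ℝ} (ha : 0 < a) (hd : 0 < d)
    (f : EuclideanSpace ℝ (Fin 2) → EuclideanSpace ℝ (Fin 2))
    (h : EuclideanSpace ℝ (Fin 2) → ℝ) (hhdiff : Differentiable ℝ h)
    (hgrad : ∀ᵐ x ∂(volume : Measure (EuclideanSpace ℝ (Fin 2))),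
      ‖gradient h x - (2 * a)⁻¹ • f x‖ ≤ d / (2 * a)) :
    (∀ (t : ℝ) (x : EuclideanSpace ℝ (Fin 2)), HasDerivAt (fun _ : ℝ => h x) 0 t) ∧
      ∀ᵐ x ∂(volume : Measure (EuclideanSpace ℝ (Fin 2))),
        ∃ b ∈ closedBall (0 : EuclideanSpace ℝ (Fin 2)) 1,
          gradient (fun y => a * h y ^ 2) x = h x • ((-d) • b + f x) := by
  refine ⟨fun t x => hasDerivAt_const t (h x), ?_⟩
  filter_upwards [hgrad] with x hx
  obtain ⟨b, hb, hbeq⟩ := exists_mem_closedBall_smul_eq_of_norm_sub_le (by positivity) hd hx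
  refine ⟨b, hb, ?_⟩
  rw [gradient_const_mul_sq a (hhdiff x), ← hbeq, smul_smul]
  ring_nf

/-- If `h > 0` is differentiable on the torus (modelled as a ℤ²-periodic
function on ℝ²) and `|∇h − f/(2a)| ≤ d/(2a)` a.e., with `‖f‖_∞ < d`, then `(h, u ≡ 0)`
is a stationary weak solution of the Savage–Hutter system: the continuity equation
holds trivially and a.e. there is `b` in the closed unit ball with
`∇(a h²) = h (−d b + f)`. -/
theorem stationary_savage_hutter {a d : ℝ} (ha : 0 < a) (hd : 0 < d)
    (f : EuclideanSpace ℝ (Fin 2) → EuclideanSpace ℝ (Fin 2)) (hfmeas : Measurable f)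
    (hfper : ∀ (x : EuclideanSpace ℝ (Fin 2)) (k : Fin 2 → ℤ),
      f (x + (EuclideanSpace.equiv (Fin 2) ℝ).symm fun i => (k i : ℝ)) = f x)
    (hfbound : ∃ C, C < d ∧ ∀ᵐ x ∂(volume : Measure (EuclideanSpace ℝ (Fin 2))), ‖f x‖ ≤ C)
    (h : EuclideanSpace ℝ (Fin 2) → ℝ) (hhdiff : Differentiable ℝ h)
    (hhper : ∀ (x : EuclideanSpace ℝ (Fin 2)) (k : Fin 2 → ℤ),
      h (x + (EuclideanSpace.equiv (Fin 2) ℝ).symm fun i => (k i : ℝ)) = h x)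
    (hpos : ∀ x, 0 < h x)
    (hgrad : ∀ᵐ x ∂(volume : Measure (EuclideanSpace ℝ (Fin 2))),
      ‖gradient h x - (2 * a)⁻¹ • f x‖ ≤ d / (2 * a)) :
    (∀ (t : ℝ) (x : EuclideanSpace ℝ (Fin 2)), HasDerivAt (fun _ : ℝ => h x) 0 t) ∧
      ∀ᵐ x ∂(volume : Measure (EuclideanSpace ℝ (Fin 2))),
        ∃ b ∈ closedBall (0 : EuclideanSpace ℝ (Fin 2)) 1,
          gradient (fun y => a * h y ^ 2) x = h x • ((-d) • b + f x) :=
  stationary_savage_hutter_general ha hd f h hhdiff hgrad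
end

section
/- Let γ > 1, let ν be a probability measure on ℝ⁺ × ℝⁿ with ∫ λ₁^γ + |λ'|² dν < ∞, and let H > 0, U ∈ ℝⁿ. If ∫ [λ₁^γ/(γ−1) − γH^{γ−1}λ₁/(γ−1) + H^γ] dν = 0 and ∫ |λ' − √λ₁ U|² dν = 0, then ν = δ_{(H, √H U)}. -/
open MeasureTheory

private lemma key_eq {γ H x : ℝ} (hγ : 1 < γ) (hH : 0 < H) (hx : 0 ≤ x)
    (h0 : x ^ γ / (γ - 1) - γ * H ^ (γ - 1) * x / (γ - 1) + H ^ γ ≤ 0) : x = H := by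
  by_contra hne
  have hs : -1 ≤ x / H - 1 := by
    have : 0 ≤ x / H := div_nonneg hx hH.le
    linarith
  have hs' : x / H - 1 ≠ 0 := by
    intro h
    apply hne
    field_simp at h
    linarith
  have hb := one_add_mul_self_lt_rpow_one_add hs hs' hγ
  have hxH : (1 + (x / H - 1)) = x / H := by ring
  rw [hxH, Real.div_rpow hx hH.le] at hb
  have hHγ : (0:ℝ) < H ^ γ := Real.rpow_pos_of_pos hH γ
  have hγ1 : (0:ℝ) < γ - 1 := by linarith
  have hBA : H ^ (γ - 1) * H = H ^ γ := by
    nth_rewrite 2 [← Real.rpow_one H]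
    rw [← Real.rpow_add hH]
    norm_num
  have hb' : (1 + γ * (x / H - 1)) * H ^ γ < x ^ γ := (lt_div_iff₀ hHγ).mp hb
  have e2 : (1 + γ * (x / H - 1)) * H ^ γ
      = H ^ γ + γ * H ^ (γ - 1) * x - γ * H ^ γ := by
    rw [← hBA]
    field_simp
    ring
  have e : (γ - 1) * (x ^ γ / (γ - 1) - γ * H ^ (γ - 1) * x / (γ - 1) + H ^ γ)
      = x ^ γ - γ * H ^ (γ - 1) * x + (γ - 1) * H ^ γ := by
    field_simp
  have h0' := mul_le_mul_of_nonneg_left h0 hγ1.le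
  rw [e] at h0'
  rw [e2] at hb'
  nlinarith [h0', hb']

/-- For `γ > 1`, if a probability measure `ν` on `ℝ⁺ × ℝⁿ` with
`∫ λ₁^γ + |λ'|² dν < ∞` satisfies `∫ Φ(λ₁,H) dν = 0` (with
`Φ(λ₁,H) = λ₁^γ/(γ−1) − γH^{γ−1}λ₁/(γ−1) + H^γ`) and `∫ |λ' − √λ₁ U|² dν = 0`,
then `ν = δ_{(H, √H U)}`. -/
theorem vanishing_relative_energy_dirac_euler {n : ℕ} {γ : ℝ} (hγ : 1 < γ)
    (ν : Measure (ℝ × EuclideanSpace ℝ (Fin n))) [IsProbabilityMeasure ν]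
    (hsupp : ν {p | p.1 < 0} = 0)
    (hmom : ∫⁻ p, ENNReal.ofReal (p.1 ^ γ + ‖p.2‖ ^ 2) ∂ν ≠ ⊤)
    (H : ℝ) (hH : 0 < H) (U : EuclideanSpace ℝ (Fin n))
    (hpressure : ∫⁻ p, ENNReal.ofReal
        (p.1 ^ γ / (γ - 1) - γ * H ^ (γ - 1) * p.1 / (γ - 1) + H ^ γ) ∂ν = 0)
    (hvel : ∫⁻ p, ENNReal.ofReal (‖p.2 - Real.sqrt p.1 • U‖ ^ 2) ∂ν = 0) :
    ν = Measure.dirac (H, Real.sqrt H • U) := by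
  have hpos : ∀ᵐ p ∂ν, 0 ≤ (p : ℝ × EuclideanSpace ℝ (Fin n)).1 := by
    rw [ae_iff]
    simpa [not_le] using hsupp
  have hmeas1 : Measurable fun p : ℝ × EuclideanSpace ℝ (Fin n) =>
      ENNReal.ofReal (p.1 ^ γ / (γ - 1) - γ * H ^ (γ - 1) * p.1 / (γ - 1) + H ^ γ) := by
    apply ENNReal.measurable_ofReal.comp
    fun_prop
  have hmeas2 : Measurable fun p : ℝ × EuclideanSpace ℝ (Fin n) =>
      ENNReal.ofReal (‖p.2 - Real.sqrt p.1 • U‖ ^ 2) := by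
    apply ENNReal.measurable_ofReal.comp
    fun_prop
  have h1 := (lintegral_eq_zero_iff hmeas1).mp hpressure
  have h2 := (lintegral_eq_zero_iff hmeas2).mp hvel
  have hae : ∀ᵐ p ∂ν, p = ((H, Real.sqrt H • U) : ℝ × EuclideanSpace ℝ (Fin n)) := by
    filter_upwards [hpos, h1, h2] with p hp h1p h2p
    simp only [Pi.zero_apply, ENNReal.ofReal_eq_zero] at h1p h2p
    have hp1 : p.1 = H := key_eq hγ hH hp h1p
    have hnorm : ‖p.2 - Real.sqrt p.1 • U‖ = 0 := by
      have := sq_nonneg ‖p.2 - Real.sqrt p.1 • U‖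
      nlinarith [norm_nonneg (p.2 - Real.sqrt p.1 • U)]
    have hp2 : p.2 = Real.sqrt p.1 • U := by
      rwa [norm_eq_zero, sub_eq_zero] at hnorm
    rw [Prod.ext_iff]
    exact ⟨hp1, by rw [hp2, hp1]⟩
  ext s hs
  rw [Measure.dirac_apply' _ hs]
  by_cases hc : ((H, Real.sqrt H • U) : ℝ × EuclideanSpace ℝ (Fin n)) ∈ s
  · rw [Set.indicator_of_mem hc, Pi.one_apply]
    rw [← prob_compl_eq_zero_iff hs]
    apply measure_mono_null _ (ae_iff.mp hae)
    intro p hp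
    simp only [Set.mem_compl_iff] at hp
    simp only [Set.mem_setOf_eq]
    intro h; exact hp (h ▸ hc)
  · rw [Set.indicator_of_notMem hc]
    apply measure_mono_null _ (ae_iff.mp hae)
    intro p hp
    simp only [Set.mem_setOf_eq]
    intro h; exact hc (h ▸ hp)
end
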